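/- arXiv:1604.05369 — 2 statements merged into one kernel-verified Lean document; each statement's English description precedes it below -/
import Mathlib

section
/- If a real n×n matrix M has an eigenvalue with nonnegative real part, then for every positive semidefinite matrix P, λmax(MᵀP + PM) ≥ 0; consequently the infimum over P ⪰ 0 of λmax(MᵀP + PM) is nonnegative. -/
open Matrix

/-- The largest value of the Rayleigh quotient `xᵀ S x` over unit vectors,
which for a symmetric matrix `S` is its largest eigenvalue. -/
noncomputable def lamMax {n : ℕ} (S : Matrix (Fin n) (Fin n) ℝ) : ℝ :=
  sSup {r : ℝ | ∃ x : Fin n → ℝ, x ⬝ᵥ x = 1 ∧ r = x ⬝ᵥ (S *ᵥ x)}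

/-!
Let `μ` be an eigenvalue of `M` with `Re μ ≥ 0` and `a + ib ≠ 0` an eigenvector. For
symmetric `P` and `S = MᵀP + PM`, the real and imaginary parts of `M(a + ib) = μ(a + ib)`
give `aᵀSa + bᵀSb = 2 Re μ (aᵀPa + bᵀPb)`, which is `≥ 0` when `P ⪰ 0`. Since
`xᵀSx ≤ λmax(S) ‖x‖²` for every `x`, this forces `λmax(S) (‖a‖² + ‖b‖²) ≥ 0`.
-/

namespace Matrix

variable {n R : Type*} [Fintype n]

theorem exists_mulVec_eq_smul_of_mem_spectrum [Field R] [DecidableEq n]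
    {A : Matrix n n R} {μ : R} (hμ : μ ∈ spectrum R A) :
    ∃ v : n → R, v ≠ 0 ∧ A *ᵥ v = μ • v := by
  rw [← spectrum_toLin', ← Module.End.hasEigenvalue_iff_mem_spectrum] at hμ
  obtain ⟨v, hv, hv0⟩ := hμ.exists_hasEigenvector
  exact ⟨v, hv0, by simpa using Module.End.mem_eigenspace_iff.mp hv⟩

theorem re_map_ofReal_mulVec (M : Matrix n n ℝ) (v : n → ℂ) :
    (fun i => ((M.map Complex.ofReal *ᵥ v) i).re) = M *ᵥ fun i => (v i).re := by
  ext i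
  simp [mulVec, dotProduct, Complex.re_sum]

theorem im_map_ofReal_mulVec (M : Matrix n n ℝ) (v : n → ℂ) :
    (fun i => ((M.map Complex.ofReal *ᵥ v) i).im) = M *ᵥ fun i => (v i).im := by
  ext i
  simp [mulVec, dotProduct, Complex.im_sum]

theorem mulVec_re_im_of_map_ofReal_mulVec_eq_smul {M : Matrix n n ℝ} {μ : ℂ} {v : n → ℂ}
    (hv : M.map Complex.ofReal *ᵥ v = μ • v) :
    M *ᵥ (fun i => (v i).re) =
        μ.re • (fun i => (v i).re) - μ.im • (fun i => (v i).im) ∧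
      M *ᵥ (fun i => (v i).im) =
        μ.im • (fun i => (v i).re) + μ.re • (fun i => (v i).im) := by
  rw [← re_map_ofReal_mulVec, ← im_map_ofReal_mulVec, hv]
  constructor <;> ext i <;>
    simp only [Pi.smul_apply, smul_eq_mul, Complex.mul_re, Complex.mul_im, Pi.sub_apply,
      Pi.add_apply]
  ring

theorem re_dotProduct_add_im_dotProduct_pos {v : n → ℂ} (hv : v ≠ 0) :
    0 < (fun i => (v i).re) ⬝ᵥ (fun i => (v i).re) +
      (fun i => (v i).im) ⬝ᵥ (fun i => (v i).im) := by
  have hre := dotProduct_star_self_nonneg fun i => (v i).re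
  have him := dotProduct_star_self_nonneg fun i => (v i).im
  rw [star_trivial] at hre him
  refine (add_nonneg hre him).lt_of_ne' fun h => hv ?_
  obtain ⟨hre0, him0⟩ := (add_eq_zero_iff_of_nonneg hre him).1 h
  funext i
  exact Complex.ext (congrFun (dotProduct_self_eq_zero.1 hre0) i)
    (congrFun (dotProduct_self_eq_zero.1 him0) i)

theorem IsSymm.dotProduct_mulVec_comm [CommSemiring R] {P : Matrix n n R} (hP : P.IsSymm)
    (u w : n → R) : u ⬝ᵥ (P *ᵥ w) = w ⬝ᵥ (P *ᵥ u) := by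
  rw [dotProduct_mulVec, ← mulVec_transpose, hP.eq, dotProduct_comm]

theorem dotProduct_transpose_mul_add_mul_mulVec [CommSemiring R] {M P : Matrix n n R}
    (hP : P.IsSymm) (w : n → R) :
    w ⬝ᵥ ((Mᵀ * P + P * M) *ᵥ w) = 2 * ((M *ᵥ w) ⬝ᵥ (P *ᵥ w)) := by
  rw [add_mulVec, dotProduct_add, ← mulVec_mulVec, ← mulVec_mulVec, dotProduct_mulVec w Mᵀ,
    vecMul_transpose, hP.dotProduct_mulVec_comm w]
  ring

theorem dotProduct_transpose_mul_add_mul_mulVec_add_of_rotation [CommRing R]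
    {M P : Matrix n n R} (hP : P.IsSymm) {a b : n → R} {r s : R}
    (ha : M *ᵥ a = r • a - s • b) (hb : M *ᵥ b = s • a + r • b) :
    a ⬝ᵥ ((Mᵀ * P + P * M) *ᵥ a) + b ⬝ᵥ ((Mᵀ * P + P * M) *ᵥ b)
      = 2 * r * (a ⬝ᵥ (P *ᵥ a) + b ⬝ᵥ (P *ᵥ b)) := by
  rw [dotProduct_transpose_mul_add_mul_mulVec hP, dotProduct_transpose_mul_add_mul_mulVec hP,
    ha, hb]
  simp only [sub_dotProduct, add_dotProduct, smul_dotProduct, smul_eq_mul,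
    hP.dotProduct_mulVec_comm b a]
  ring

end Matrix

theorem isCompact_setOf_dotProduct_self_eq_one (n : Type*) [Fintype n] :
    IsCompact {x : n → ℝ | x ⬝ᵥ x = 1} := by
  refine Metric.isCompact_of_isClosed_isBounded (isClosed_eq (by fun_prop) continuous_const)
    ((Metric.isBounded_iff_subset_closedBall 0).2 ⟨1, fun x hx => ?_⟩)
  rw [mem_closedBall_zero_iff, pi_norm_le_iff_of_nonneg zero_le_one]
  intro i
  rw [Real.norm_eq_abs, abs_le_one_iff_mul_self_le_one, ← hx.out]
  exact Finset.single_le_sum (fun j _ => mul_self_nonneg (x j)) (Finset.mem_univ i)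

theorem bddAbove_rayleigh_set {n : ℕ} (S : Matrix (Fin n) (Fin n) ℝ) :
    BddAbove {r : ℝ | ∃ x : Fin n → ℝ, x ⬝ᵥ x = 1 ∧ r = x ⬝ᵥ (S *ᵥ x)} := by
  refine ((isCompact_setOf_dotProduct_self_eq_one _).bddAbove_image
    (f := fun x => x ⬝ᵥ (S *ᵥ x)) (by fun_prop)).mono ?_
  rintro r ⟨x, hx, rfl⟩
  exact ⟨x, hx, rfl⟩

theorem dotProduct_mulVec_le_lamMax_mul {n : ℕ} (S : Matrix (Fin n) (Fin n) ℝ)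
    (w : Fin n → ℝ) : w ⬝ᵥ (S *ᵥ w) ≤ lamMax S * (w ⬝ᵥ w) := by
  rcases eq_or_ne w 0 with rfl | hw
  · simp
  have hww : 0 < w ⬝ᵥ w :=
    (by simpa using dotProduct_star_self_nonneg w : 0 ≤ w ⬝ᵥ w).lt_of_ne' (by simpa using hw)
  set c := √(w ⬝ᵥ w)
  have hc : 0 < c := Real.sqrt_pos.2 hww
  have hcc : c * c = w ⬝ᵥ w := Real.mul_self_sqrt hww.le
  have hunit : c⁻¹ • w ⬝ᵥ c⁻¹ • w = 1 := by
    simp only [smul_dotProduct, dotProduct_smul, smul_eq_mul, ← hcc]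
    field_simp
  have hle : c⁻¹ • w ⬝ᵥ (S *ᵥ c⁻¹ • w) ≤ lamMax S :=
    le_csSup (bddAbove_rayleigh_set S) ⟨_, hunit, rfl⟩
  simp only [mulVec_smul, smul_dotProduct, dotProduct_smul, smul_eq_mul] at hle
  rw [← hcc]
  field_simp at hle
  linarith

/-- If `M` has an eigenvalue with nonnegative real part, then for every
positive semidefinite `P`, `λmax(MᵀP + PM) ≥ 0`; consequently the infimum
over `P ⪰ 0` of `λmax(MᵀP + PM)` is nonnegative. -/
theorem lamMax_nonneg_of_unstable {n : ℕ} (M : Matrix (Fin n) (Fin n) ℝ)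
    (hM : ∃ μ ∈ spectrum ℂ (M.map (algebraMap ℝ ℂ)), 0 ≤ μ.re) :
    (∀ P : Matrix (Fin n) (Fin n) ℝ, P.PosSemidef →
        0 ≤ lamMax (Mᵀ * P + P * M)) ∧
      0 ≤ sInf {r : ℝ | ∃ P : Matrix (Fin n) (Fin n) ℝ, P.PosSemidef ∧
          r = lamMax (Mᵀ * P + P * M)} := by
  obtain ⟨μ, hμ, hre⟩ := hM
  obtain ⟨v, hv0, hv⟩ := exists_mulVec_eq_smul_of_mem_spectrum hμ
  obtain ⟨ha, hb⟩ := mulVec_re_im_of_map_ofReal_mulVec_eq_smul hv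
  set a := fun i => (v i).re
  set b := fun i => (v i).im
  have hnonneg (P : Matrix (Fin n) (Fin n) ℝ) (hP : P.PosSemidef) :
      0 ≤ lamMax (Mᵀ * P + P * M) := by
    have hPa := hP.dotProduct_mulVec_nonneg a
    have hPb := hP.dotProduct_mulVec_nonneg b
    rw [star_trivial] at hPa hPb
    have hle := add_le_add (dotProduct_mulVec_le_lamMax_mul (Mᵀ * P + P * M) a)
      (dotProduct_mulVec_le_lamMax_mul (Mᵀ * P + P * M) b)
    rw [dotProduct_transpose_mul_add_mul_mulVec_add_of_rotation
      (isHermitian_iff_isSymm.1 hP.isHermitian) ha hb, ← mul_add] at hle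
    refine le_of_mul_le_mul_right ?_ (re_dotProduct_add_im_dotProduct_pos hv0)
    rw [zero_mul]
    exact (by positivity : 0 ≤ 2 * μ.re * (a ⬝ᵥ (P *ᵥ a) + b ⬝ᵥ (P *ᵥ b))).trans hle
  exact ⟨hnonneg, Real.sInf_nonneg (by rintro r ⟨P, hP, rfl⟩; exact hnonneg P hP)⟩
end

section
/- With E₁, E₂ as above, the 6×6 block matrix A_a = [[E₁, E₂, −E₁], [E₁, E₂, 0], [−E₁, E₂, 2E₁]] has an eigenvalue with positive real part; in particular A_a is not Hurwitz stable. -/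
open Matrix

def IsHurwitz {m : Type*} [Fintype m] [DecidableEq m] (M : Matrix m m ℝ) : Prop :=
  ∀ μ ∈ spectrum ℂ (M.map (algebraMap ℝ ℂ)), μ.re < 0

def E₁ : Matrix (Fin 2) (Fin 2) ℝ := !![-3, -1; 12, 2]

def E₂ : Matrix (Fin 2) (Fin 2) ℝ := !![-3, 1; -12, 2]

/-- The 3×3 array of 2×2 blocks of the post-attack matrix. -/
def blocks : Fin 3 → Fin 3 → Matrix (Fin 2) (Fin 2) ℝ :=
  ![![E₁, E₂, -E₁], ![E₁, E₂, 0], ![-E₁, E₂, (2 : ℝ) • E₁]]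

/-- The 6×6 post-attack closed-loop matrix assembled from the 2×2 blocks. -/
def Aa : Matrix (Fin 3 × Fin 2) (Fin 3 × Fin 2) ℝ :=
  fun p q => blocks p.1 q.1 p.2 q.2

/-! The characteristic polynomial of `Aa` is monic, hence positive for large arguments, while at
`1` it equals `-822`. By the intermediate value theorem it has a real root `t > 1`, which is a real
eigenvalue of `Aa` in the right half-plane. -/

open Polynomial

theorem Polynomial.exists_gt_isRoot_of_monic_of_eval_neg {p : ℝ[X]} (hp : p.Monic) {a : ℝ}
    (ha : p.eval a < 0) : ∃ t, a < t ∧ p.IsRoot t := by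
  have hdeg : 0 < p.degree := by
    refine natDegree_pos_iff_degree_pos.mp (hp.natDegree_pos.mpr ?_)
    rintro rfl
    norm_num at ha
  have hlim := tendsto_atTop_of_leadingCoeff_nonneg p hdeg (hp.leadingCoeff ▸ zero_le_one)
  obtain ⟨b, hb, hab⟩ := ((hlim.eventually_ge_atTop 0).and (Filter.eventually_ge_atTop a)).exists
  obtain ⟨t, ⟨hat, -⟩, ht⟩ := intermediate_value_Icc hab p.continuous.continuousOn ⟨ha.le, hb⟩
  exact ⟨t, hat.lt_of_ne (by rintro rfl; exact ha.ne ht), ht⟩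

namespace Matrix

variable {n : Type*} [Fintype n] [DecidableEq n]

theorem ofReal_mem_spectrum_map_of_isRoot_charpoly {M : Matrix n n ℝ} {t : ℝ}
    (ht : M.charpoly.IsRoot t) : (t : ℂ) ∈ spectrum ℂ (M.map (algebraMap ℝ ℂ)) := by
  apply mem_spectrum_of_isRoot_charpoly
  rw [charpoly_map]
  exact ht.map

theorem exists_lt_re_mem_spectrum_of_eval_charpoly_neg {M : Matrix n n ℝ} {a : ℝ}
    (ha : M.charpoly.eval a < 0) : ∃ μ ∈ spectrum ℂ (M.map (algebraMap ℝ ℂ)), a < μ.re := by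
  obtain ⟨t, hat, ht⟩ := exists_gt_isRoot_of_monic_of_eval_neg (charpoly_monic M) ha
  exact ⟨t, ofReal_mem_spectrum_map_of_isRoot_charpoly ht, by simpa using hat⟩

end Matrix

theorem one_sub_Aa_eq_submatrix :
    1 - Aa = (!![4, 1, 3, -1, -3, -1;
        -12, -1, 12, -2, 12, 2;
        3, 1, 4, -1, 0, 0;
        -12, -2, 12, -1, 0, 0;
        -3, -1, 3, -1, 7, 2;
        12, 2, 12, -2, -24, -3] : Matrix (Fin 6) (Fin 6) ℝ).submatrix
      finProdFinEquiv finProdFinEquiv := by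
  ext ⟨i, j⟩ ⟨k, l⟩
  fin_cases i <;> fin_cases k <;> simp only [Matrix.sub_apply, Aa, blocks] <;>
    fin_cases j <;> fin_cases l <;> norm_num [E₁, E₂, one_apply, finProdFinEquiv]

theorem eval_one_charpoly_Aa : Aa.charpoly.eval 1 = -822 := by
  rw [eval_charpoly, map_one, one_sub_Aa_eq_submatrix, det_submatrix_equiv_self]
  simp only [det_succ_row_zero, Fin.sum_univ_succ, Fin.sum_univ_zero, submatrix_apply,
    Fin.succAbove_zero, Fin.succ_succAbove_zero, Fin.succ_succAbove_succ, det_fin_zero,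
    of_apply, cons_val_succ, cons_val_zero, Fin.val_zero, Fin.val_succ, pow_zero, pow_succ]
  norm_num

/-- `A_a` has an eigenvalue with positive real part; in particular it is not
Hurwitz stable. -/
theorem Aa_not_hurwitz :
    (∃ μ ∈ spectrum ℂ (Aa.map (algebraMap ℝ ℂ)), 0 < μ.re) ∧ ¬ IsHurwitz Aa := by
  have hneg : Aa.charpoly.eval 1 < 0 := by norm_num [eval_one_charpoly_Aa]
  obtain ⟨μ, hμ, hre⟩ := exists_lt_re_mem_spectrum_of_eval_charpoly_neg hneg
  exact ⟨⟨μ, hμ, by linarith⟩, fun h => (h μ hμ).not_gt (by linarith)⟩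
end
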